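/- Fix positive integers M ≤ K. The pointwise maximum F(μ) = max_{ℓ=1,…,M} (K - (M-ℓ)(K-ℓ)μ)/ℓ satisfies F(1/M) = (M+K-1)/M and F(1) = K/M. That is, at μ = 1/M the maximum is attained at ℓ = 1 and at μ = 1 it is attained at ℓ = M. -/

import Mathlib

/-!
At `μ = 1/M` the numerator collapses, `MK - (M-ℓ)(K-ℓ) = ℓ(M+K-ℓ)`, so the `ℓ`-th term is
`(M+K-ℓ)/M`, decreasing in `ℓ`. At `μ = 1`, clearing denominators turns `term ℓ ≤ K/M` into
`0 ≤ (M-ℓ)(M(K-ℓ) - K)`, and for an integer `ℓ < M` we have `ℓ ≤ M - 1`, whence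
`M(K-ℓ) - K ≥ (M-1)(K-M) ≥ 0`.
-/

lemma term_at_inv_eq {𝕜 : Type*} [Field 𝕜] (m k l : 𝕜) (hm : m ≠ 0) (hl : l ≠ 0) :
    (k - (m - l) * (k - l) * (1 / m)) / l = (m + k - l) / m := by
  field_simp
  ring

section

variable {𝕜 : Type*} [Field 𝕜] [LinearOrder 𝕜] [IsStrictOrderedRing 𝕜]

-- Integrality of `l` matters: for real `l ∈ (m - 1, m)` this fails when `m = k`.
lemma natCast_le_mul_sub_of_lt_of_le {l m k : ℕ} (hlm : l < m) (hmk : m ≤ k) :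
    (k : 𝕜) ≤ m * (k - l) := by
  have hl : (l : 𝕜) + 1 ≤ m := by exact_mod_cast hlm
  have hmk' : (m : 𝕜) ≤ k := by exact_mod_cast hmk
  nlinarith [(Nat.cast_nonneg l : (0 : 𝕜) ≤ l)]

lemma term_at_one_le {l m k : ℕ} (hl : 1 ≤ l) (hlm : l ≤ m) (hmk : m ≤ k) :
    ((k : 𝕜) - ((m : 𝕜) - l) * ((k : 𝕜) - l) * 1) / l ≤ (k : 𝕜) / m := by
  have hl₀ : (0 : 𝕜) < l := by exact_mod_cast hl
  have hm₀ : (0 : 𝕜) < m := by exact_mod_cast hl.trans hlm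
  have key : (0 : 𝕜) ≤ ((m : 𝕜) - l) * (m * (k - l) - k) := by
    rcases hlm.eq_or_lt with rfl | hlt
    · simp
    · have : (l : 𝕜) ≤ m := by exact_mod_cast hlm
      exact mul_nonneg (by linarith) (by linarith [natCast_le_mul_sub_of_lt_of_le (𝕜 := 𝕜) hlt hmk])
  rw [div_le_div_iff₀ hl₀ hm₀]
  linarith

end

/-- For `0 < M ≤ K`, the pointwise maximum
`F(μ) = max_{ℓ∈{1,…,M}} (K - (M-ℓ)(K-ℓ)μ)/ℓ` satisfies `F(1/M) = (M+K-1)/M`,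
attained at `ℓ = 1`, and `F(1) = K/M`, attained at `ℓ = M`. -/
theorem ndt_lower_bound_corner_values (M K : ℕ) (hM : 0 < M) (hMK : M ≤ K) :
    (∀ ℓ ∈ Finset.Icc 1 M,
      ((K : ℝ) - ((M : ℝ) - ℓ) * ((K : ℝ) - ℓ) * (1 / (M : ℝ))) / ℓ
        ≤ ((M : ℝ) + K - 1) / M) ∧
    ((K : ℝ) - ((M : ℝ) - 1) * ((K : ℝ) - 1) * (1 / (M : ℝ))) / 1
        = ((M : ℝ) + K - 1) / M ∧
    (∀ ℓ ∈ Finset.Icc 1 M,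
      ((K : ℝ) - ((M : ℝ) - ℓ) * ((K : ℝ) - ℓ) * 1) / ℓ ≤ (K : ℝ) / M) ∧
    ((K : ℝ) - ((M : ℝ) - M) * ((K : ℝ) - M) * 1) / (M : ℝ) = (K : ℝ) / M := by
  have hM₀ : (0 : ℝ) < M := by exact_mod_cast hM
  refine ⟨fun ℓ hℓ => ?_, ?_, fun ℓ hℓ => ?_, by simp⟩
  · have hℓ : (1 : ℝ) ≤ ℓ := by exact_mod_cast (Finset.mem_Icc.1 hℓ).1
    rw [term_at_inv_eq _ _ _ hM₀.ne' (by positivity)]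
    exact div_le_div_of_nonneg_right (by linarith) hM₀.le
  · simpa using term_at_inv_eq (M : ℝ) K 1 hM₀.ne' one_ne_zero
  · obtain ⟨hℓ₁, hℓM⟩ := Finset.mem_Icc.1 hℓ
    exact term_at_one_le hℓ₁ hℓM hMK
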